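/- arXiv:2604.08913 — 7 statements merged into one kernel-verified Lean document; each statement's English description precedes it below -/
import Mathlib

section
/- Let L be an n×n real symmetric positive semidefinite matrix. Then the map Y ↦ det(L_Y)/det(L+I) is a probability mass function on the power set of {1,…,n}: each value det(L_Y)/det(L+I) is nonnegative, and the values sum to 1 over all subsets Y ⊆ {1,…,n}. -/
open Matrix BigOperators

/-- The principal submatrix of `M` indexed by the subset `S`. -/
def principalSubmatrix {n : ℕ} (M : Matrix (Fin n) (Fin n) ℝ) (S : Finset (Fin n)) :
    Matrix {i // i ∈ S} {i // i ∈ S} ℝ :=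
  M.submatrix (fun i => (i : Fin n)) (fun i => (i : Fin n))

lemma det_piecewise_eq {n : ℕ} (L : Matrix (Fin n) (Fin n) ℝ) (S : Finset (Fin n)) :
    Matrix.det (Matrix.of (S.piecewise (fun i => L i) (fun i => (1 : Matrix (Fin n) (Fin n) ℝ) i)))
      = (principalSubmatrix L S).det := by
  classical
  set M : Matrix (Fin n) (Fin n) ℝ :=
    Matrix.of (S.piecewise (fun i => L i) (fun i => (1 : Matrix (Fin n) (Fin n) ℝ) i)) with hM
  let e : {i // i ∈ S} ⊕ {i // i ∉ S} ≃ Fin n := Equiv.sumCompl (· ∈ S)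
  have hsub : M.submatrix e e =
      Matrix.fromBlocks (principalSubmatrix L S)
        (Matrix.of fun (i : {i // i ∈ S}) (j : {i // i ∉ S}) => L i j)
        0 1 := by
    ext i j
    cases i with
    | inl i =>
      cases j with
      | inl j =>
        simp [M, e, Finset.piecewise, i.2, principalSubmatrix, Matrix.submatrix]
      | inr j =>
        simp [M, e, Finset.piecewise, i.2, Matrix.submatrix]
    | inr i =>
      cases j with
      | inl j =>
        have hij : (i : Fin n) ≠ (j : Fin n) := by
          intro h
          exact i.2 (h ▸ j.2)
        simp [M, e, Finset.piecewise, i.2, Matrix.submatrix, Matrix.one_apply, hij]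
      | inr j =>
        by_cases h : (i : Fin n) = (j : Fin n)
        · have : i = j := Subtype.ext h
          simp [M, e, Finset.piecewise, i.2, Matrix.submatrix, Matrix.one_apply, this, j.2]
        · have : i ≠ j := fun hc => h (congrArg _ hc)
          simp [M, e, Finset.piecewise, i.2, Matrix.submatrix, Matrix.one_apply, h, this, j.2]
  calc M.det = (M.submatrix e e).det := (Matrix.det_submatrix_equiv_self e M).symm
    _ = (principalSubmatrix L S).det := by
        rw [hsub, Matrix.det_fromBlocks_zero₂₁, Matrix.det_one, mul_one]

lemma sum_det_eq {n : ℕ} (L : Matrix (Fin n) (Fin n) ℝ) :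
    ∑ S : Finset (Fin n), (principalSubmatrix L S).det = (L + 1).det := by
  classical
  have h := (Matrix.detRowAlternating :
      AlternatingMap ℝ (Fin n → ℝ) ℝ (Fin n)).toMultilinearMap.map_add_univ
      (fun i => L i) (fun i => (1 : Matrix (Fin n) (Fin n) ℝ) i)
  have h2 : (L + 1 : Matrix (Fin n) (Fin n) ℝ).det =
      ∑ s : Finset (Fin n),
        Matrix.det (Matrix.of (s.piecewise (fun i => L i)
          (fun i => (1 : Matrix (Fin n) (Fin n) ℝ) i))) := h
  rw [h2]
  exact Finset.sum_congr rfl fun S _ => (det_piecewise_eq L S).symm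

/-- For a real symmetric positive semidefinite `L`, the map
`Y ↦ det(L_Y) / det(L + I)` is a probability mass function on the power set of the
index set: each value is nonnegative and the values sum to `1`. -/
theorem dpp_is_pmf {n : ℕ} (L : Matrix (Fin n) (Fin n) ℝ) (hL : L.PosSemidef) :
    (∀ Y : Finset (Fin n), 0 ≤ (principalSubmatrix L Y).det / (L + 1).det) ∧
      ∑ Y : Finset (Fin n), (principalSubmatrix L Y).det / (L + 1).det = 1 := by
  classical
  have hpd : (L + 1 : Matrix (Fin n) (Fin n) ℝ).PosDef :=
    Matrix.PosDef.posSemidef_add hL Matrix.PosDef.one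
  have hdetpos : 0 < (L + 1 : Matrix (Fin n) (Fin n) ℝ).det := hpd.det_pos
  have hnonneg : ∀ Y : Finset (Fin n), 0 ≤ (principalSubmatrix L Y).det := by
    intro Y
    have hps : (principalSubmatrix L Y).PosSemidef := hL.submatrix _
    have := hps.isHermitian.det_eq_prod_eigenvalues
    rw [this]
    exact Finset.prod_nonneg fun i _ => hps.eigenvalues_nonneg i
  refine ⟨fun Y => div_nonneg (hnonneg Y) hdetpos.le, ?_⟩
  rw [← Finset.sum_div, sum_det_eq, div_self hdetpos.ne']
end

section
/- Let L be an n×n real symmetric positive semidefinite matrix and K = L(L+I)⁻¹ its marginal kernel. For every subset A ⊆ {1,…,n}, the sum of det(L_Y) over all subsets Y ⊆ {1,…,n} containing A equals det(K_A) · det(L+I); equivalently, under the L-ensemble distribution P_L(Y) = det(L_Y)/det(L+I), the inclusion probability of A satisfies P(A ⊆ Y) = det(K_A). -/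
open Matrix BigOperators

/-!
Expanding `det (L + D)` multilinearly in the rows, where `D` is the diagonal indicator of the
complement of `A`, produces exactly the principal minors `det L_Y` with `Y ⊇ A`. On the other
hand `L + D = (L + I) (I - (L + I)⁻¹ I_A)`, and the second factor agrees with the identity off
the columns of `A`, so its determinant is the principal minor on `A` of `I - (L + I)⁻¹ = K`.
-/

namespace Matrix

variable {n R : Type*} [Fintype n] [DecidableEq n] [CommRing R]

theorem det_add_diagonal (M : Matrix n n R) (d : n → R) :
    det (M + diagonal d) =
      ∑ s : Finset n, (∏ i ∈ sᶜ, d i) * det (M.submatrix (↑) (↑) : Matrix s s R) := by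
  have hrows (s : Finset n) : s.piecewise M.row (diagonal d).row =
      fun i => (if i ∈ s then 1 else d i) • s.piecewise M.row (1 : Matrix n n R).row i := by
    ext i j
    by_cases hi : i ∈ s <;> simp [hi, row, diagonal, one_apply, Finset.piecewise]
  calc det (M + diagonal d)
      = ∑ s : Finset n, detRowAlternating (s.piecewise M.row (diagonal d).row) :=
        detRowAlternating.map_add_univ M.row (diagonal d).row
    _ = _ := by
        refine Finset.sum_congr rfl fun s _ => ?_
        rw [hrows, AlternatingMap.map_smul_univ, ← det_piecewise_one_eq_submatrix_det,
          Finset.prod_ite, Finset.prod_const_one, one_mul, smul_eq_mul]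
        congr 2
        ext i
        simp

theorem sum_superset_det_submatrix_eq_det_add_diagonal (M : Matrix n n R) (A : Finset n) :
    ∑ Y ∈ Finset.univ.filter (fun Y : Finset n => A ⊆ Y),
        det (M.submatrix (↑) (↑) : Matrix Y Y R) =
      det (M + diagonal fun i => if i ∈ A then 0 else 1) := by
  rw [det_add_diagonal, Finset.sum_filter]
  refine Finset.sum_congr rfl fun s _ => ?_
  by_cases hAs : A ⊆ s
  · rw [if_pos hAs,
      Finset.prod_eq_one fun i hi => if_neg fun hiA => Finset.mem_compl.1 hi (hAs hiA), one_mul]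
  · obtain ⟨i, hiA, his⟩ := Finset.not_subset.1 hAs
    rw [if_neg hAs, Finset.prod_eq_zero (Finset.mem_compl.2 his) (by rw [if_pos hiA]), zero_mul]

theorem det_eq_det_submatrix_of_col_eq_one {M : Matrix n n R} {s : Finset n}
    (h : ∀ j ∉ s, ∀ i, M i j = (1 : Matrix n n R) i j) :
    det M = det (M.submatrix (↑) (↑) : Matrix s s R) := by
  have hT : Mᵀ = of (s.piecewise Mᵀ.row (1 : Matrix n n R).row) := by
    ext j i
    by_cases hj : j ∈ s
    · simp [hj, row, Finset.piecewise]
    · simp [hj, row, h j hj, one_apply, eq_comm, Finset.piecewise]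
  rw [← det_transpose, hT, det_piecewise_one_eq_submatrix_det, ← det_transpose]
  rfl

theorem det_one_sub_mul_diagonal_indicator (N : Matrix n n R) (s : Finset n) :
    det (1 - N * diagonal fun i => if i ∈ s then 1 else 0) =
      det ((1 - N).submatrix (↑) (↑) : Matrix s s R) := by
  have hcols : ∀ j ∉ s, ∀ i,
      (1 - N * diagonal fun i => if i ∈ s then 1 else 0 : Matrix n n R) i j =
        (1 : Matrix n n R) i j := by
    intro j hj i
    simp [hj]
  rw [det_eq_det_submatrix_of_col_eq_one hcols]
  congr 1
  ext i j
  simp [j.2]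

theorem det_sub_diagonal_indicator {P : Matrix n n R} (hP : IsUnit P.det) (s : Finset n) :
    det (P - diagonal fun i => if i ∈ s then 1 else 0) =
      det P * det ((1 - P⁻¹).submatrix (↑) (↑) : Matrix s s R) := by
  rw [← det_one_sub_mul_diagonal_indicator, ← det_mul, mul_sub, mul_one, ← mul_assoc,
    mul_nonsing_inv P hP, one_mul]

end Matrix

/-- For the marginal kernel `K = L (L + I)⁻¹` of an L-ensemble DPP, the inclusion
probability of a subset `A` satisfies `P(A ⊆ Y) = det(K_A)`; explicitly,
`Σ_{Y ⊇ A} det(L_Y) = det(K_A) · det(L + I)`. -/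
theorem inclusion_probability_eq_det_marginal {n : ℕ} (L : Matrix (Fin n) (Fin n) ℝ)
    (hL : L.PosSemidef) (A : Finset (Fin n)) :
    ∑ Y ∈ Finset.univ.filter (fun Y : Finset (Fin n) => A ⊆ Y),
        (principalSubmatrix L Y).det
      = (principalSubmatrix (L * (L + 1)⁻¹) A).det * (L + 1).det := by
  have hunit : IsUnit (L + 1).det := (PosDef.posSemidef_add hL PosDef.one).det_pos.ne'.isUnit
  have hK : L * (L + 1)⁻¹ = 1 - (L + 1)⁻¹ := by
    rw [eq_sub_iff_add_eq, ← add_one_mul, mul_nonsing_inv _ hunit]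
  have hdiag : L + diagonal (fun i => if i ∈ A then 0 else 1) =
      L + 1 - diagonal fun i => if i ∈ A then 1 else 0 := by
    ext i j
    by_cases hi : i ∈ A <;> simp [diagonal, one_apply, hi]
  unfold principalSubmatrix
  rw [sum_superset_det_submatrix_eq_det_add_diagonal, hdiag, det_sub_diagonal_indicator hunit, hK,
    mul_comm]
end

section
/- Let L be an n×n real symmetric positive semidefinite matrix and K = L(L+I)⁻¹. Then the expected cardinality of a subset drawn from the L-ensemble equals the trace of K: Σ_{Y ⊆ {1,…,n}} |Y| · det(L_Y) = trace(K) · det(L+I). Moreover, if λ₁,…,λₙ are the eigenvalues of L, then trace(K) = Σᵢ λᵢ/(λᵢ+1). -/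
/-!
Expanding every row of `1 + M` as a row of `M` plus a unit row gives `det (1 + M) = Σ_S det M_S`;
the same expansion for `M` with row `i` cleared gives the diagonal cofactor
`adj (1 + M) i i = Σ_{S ∌ i} det M_S`. Counting pairs `i ∈ S`,
`Σ_S |S| det M_S = n det (1 + M) - tr adj (1 + M) = tr (M adj (1 + M))`, and for `L ⪰ 0` the
matrix `1 + L` is invertible with `adj (1 + L) = det (1 + L) (1 + L)⁻¹`.
The eigenvalue formula holds because `L (L + 1)⁻¹` is `f L` in the functional calculus of `L`,
with `f x = x / (x + 1)`, and the trace of `f L` is `Σ f λᵢ`.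
-/

open Matrix BigOperators

open Finset

namespace Matrix

section CommRing

variable {n R : Type*} [Fintype n] [DecidableEq n] [CommRing R]

theorem det_one_add_eq_sum_det_submatrix (M : Matrix n n R) :
    (1 + M).det = ∑ s : Finset n, (M.submatrix ((↑) : s → n) (↑)).det := by
  rw [add_comm]
  change detRowAlternating ((fun i => M i) + fun i => (1 : Matrix n n R) i) = _
  rw [detRowAlternating.map_add_univ]
  exact sum_congr rfl fun s _ => det_piecewise_one_eq_submatrix_det M s

theorem adjugate_one_add_apply_self (M : Matrix n n R) (i : n) :
    adjugate (1 + M) i i = ∑ s : Finset n with i ∉ s, (M.submatrix ((↑) : s → n) (↑)).det := by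
  have hrow : (1 + M).updateRow i (Pi.single i 1) = 1 + M.updateRow i 0 := by
    ext a b
    rcases eq_or_ne a i with rfl | ha
    · simp [one_apply, Pi.single_apply, eq_comm]
    · simp [updateRow_ne ha]
  have hminor (s : Finset n) : ((M.updateRow i 0).submatrix ((↑) : s → n) (↑)).det
      = if i ∈ s then 0 else (M.submatrix ((↑) : s → n) (↑)).det := by
    split_ifs with hi
    · exact det_eq_zero_of_row_eq_zero ⟨i, hi⟩ fun j => by simp
    · congr 1
      ext a b
      simp [updateRow_ne (ne_of_mem_of_not_mem a.2 hi)]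
  rw [adjugate_apply, hrow, det_one_add_eq_sum_det_submatrix, sum_filter]
  exact sum_congr rfl fun s _ => by rw [hminor, ite_not]

theorem sum_card_mul_det_submatrix (M : Matrix n n R) :
    ∑ s : Finset n, (#s : R) * (M.submatrix ((↑) : s → n) (↑)).det
      = (M * adjugate (1 + M)).trace := by
  set d : Finset n → R := fun s => (M.submatrix ((↑) : s → n) (↑)).det
  have hmem (i : n) : ∑ s with i ∈ s, d s = (1 + M).det - adjugate (1 + M) i i := by
    rw [adjugate_one_add_apply_self, det_one_add_eq_sum_det_submatrix,
      ← sum_filter_add_sum_filter_not univ (i ∈ ·)]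
    ring
  have hadj : M * adjugate (1 + M) = (1 + M).det • 1 - adjugate (1 + M) := by
    rw [← mul_adjugate, add_mul, one_mul, add_sub_cancel_left]
  rw [hadj, trace_sub, trace_smul, trace_one]
  calc ∑ s, (#s : R) * d s = ∑ s, ∑ i ∈ s, d s := by simp
    _ = ∑ i, ∑ s with i ∈ s, d s := sum_comm' (by simp)
    _ = ∑ i, ((1 + M).det - adjugate (1 + M) i i) := sum_congr rfl fun i _ => hmem i
    _ = _ := by simp [sum_sub_distrib, trace, mul_comm]

theorem adjugate_eq_det_smul_inv {A : Matrix n n R} (h : IsUnit A.det) :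
    adjugate A = A.det • A⁻¹ := by
  rw [inv_def, smul_smul, Ring.mul_inverse_cancel _ h, one_smul]

end CommRing

section RCLike

open scoped ComplexOrder

variable {n 𝕜 : Type*} [Fintype n] [DecidableEq n] [RCLike 𝕜] {A : Matrix n n 𝕜}

theorem IsHermitian.trace_cfc (hA : A.IsHermitian) (f : ℝ → ℝ) :
    (cfc f A).trace = ∑ i, (f (hA.eigenvalues i) : 𝕜) := by
  rw [hA.cfc_eq, IsHermitian.cfc, Unitary.conjStarAlgAut_apply, trace_mul_cycle,
    Unitary.coe_star_mul_self, one_mul, trace_diagonal]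
  rfl

theorem PosSemidef.mul_inv_add_one_eq_cfc (hA : A.PosSemidef) :
    A * (A + 1)⁻¹ = cfc (fun x : ℝ => x / (x + 1)) A := by
  have hspec : ∀ x ∈ spectrum ℝ A, x + 1 ≠ 0 := by
    rw [hA.1.spectrum_real_eq_range_eigenvalues]
    rintro - ⟨i, rfl⟩
    linarith [hA.eigenvalues_nonneg i]
  have hA' : IsSelfAdjoint A := hA.1
  have hinv : cfc (fun x : ℝ => (x + 1)⁻¹) A = (A + 1)⁻¹ := by
    rw [cfc_inv (fun x : ℝ => x + 1) A hspec, cfc_add_const 1 (fun x : ℝ => x) A, cfc_id' ℝ A,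
      map_one, nonsing_inv_eq_ringInverse]
  simp_rw [div_eq_mul_inv]
  rw [cfc_mul (fun x : ℝ => x) (fun x : ℝ => (x + 1)⁻¹) A continuousOn_id
    ((continuousOn_id.add continuousOn_const).inv₀ hspec), cfc_id' ℝ A, hinv]

end RCLike

end Matrix

/-- The expected cardinality of a subset drawn from the L-ensemble with kernel
`L` equals `trace K` where `K = L (L + I)⁻¹`:
`Σ_Y |Y| det(L_Y) = trace(K) · det(L + I)`, and moreover
`trace(K) = Σᵢ λᵢ / (λᵢ + 1)` where the `λᵢ` are the eigenvalues of `L`. -/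
theorem expected_cardinality_eq_trace {n : ℕ} (L : Matrix (Fin n) (Fin n) ℝ)
    (hL : L.PosSemidef) :
    (∑ Y : Finset (Fin n), (Y.card : ℝ) * (principalSubmatrix L Y).det
        = (L * (L + 1)⁻¹).trace * (L + 1).det) ∧
      (L * (L + 1)⁻¹).trace
        = ∑ i, hL.1.eigenvalues i / (hL.1.eigenvalues i + 1) := by
  have hdet : IsUnit (L + 1).det := (PosDef.posSemidef_add hL PosDef.one).det_pos.ne'.isUnit
  refine ⟨(sum_card_mul_det_submatrix L).trans ?_, ?_⟩
  · rw [add_comm 1 L, adjugate_eq_det_smul_inv hdet, mul_smul_comm, trace_smul, smul_eq_mul,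
      mul_comm]
  · rw [hL.mul_inv_add_one_eq_cfc, hL.1.trace_cfc]
    rfl
end

section
/- Let L be an n×n real symmetric positive semidefinite matrix with eigenvalues λ₁,…,λₙ, and K = L(L+I)⁻¹. Then the variance of the cardinality of a subset Y drawn from the L-ensemble satisfies Var[|Y|] = Σᵢ λᵢ/(λᵢ+1)²; explicitly, Σ_{Y ⊆ {1,…,n}} |Y|² · det(L_Y)/det(L+I) − (trace K)² = Σᵢ λᵢ/(λᵢ+1)². -/
open Matrix BigOperators

/-!
A sum over subsets `S` of `det L_S` weighted by a function of `|S|` only sees, for each `k`, the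
sum of the `k × k` principal minors, which is a coefficient of the characteristic polynomial.
So `L` may be replaced by the diagonal matrix of its eigenvalues `λ`, for which
`det L_S = ∏_{i ∈ S} λ_i`. Then `Y` has independent coordinates, `i ∈ Y` with probability
`λ_i / (λ_i + 1)`, and the variance of `|Y|` is the sum of the Bernoulli variances
`λ_i / (λ_i + 1)²`; the moment sums are computed by induction on the ground set.
-/

open Finset Polynomial Unitary

namespace Matrix

variable {n R : Type*} [DecidableEq n] [CommRing R]

theorem det_submatrix_diagonal (d : n → R) (s : Finset n) :
    ((diagonal d).submatrix Subtype.val Subtype.val : Matrix s s R).det = ∏ i ∈ s, d i := by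
  rw [submatrix_diagonal _ _ Subtype.val_injective, det_diagonal]
  exact prod_coe_sort s d

variable [Fintype n]

theorem sum_powersetCard_det_submatrix_eq_of_charpoly_eq {A B : Matrix n n R}
    (h : A.charpoly = B.charpoly) (k : ℕ) :
    ∑ s ∈ univ.powersetCard k, (A.submatrix Subtype.val Subtype.val : Matrix s s R).det =
      ∑ s ∈ univ.powersetCard k, (B.submatrix Subtype.val Subtype.val : Matrix s s R).det := by
  by_cases hk : k ≤ Fintype.card n
  · have hAB := charpoly_coeff_eq_sum_minors A k hk
    rw [h, charpoly_coeff_eq_sum_minors B k hk] at hAB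
    exact ((isUnit_neg_one.pow k).mul_left_cancel hAB).symm
  · rw [powersetCard_eq_empty.2 (by simpa using hk), sum_empty, sum_empty]

theorem sum_mul_det_submatrix_eq_of_charpoly_eq {A B : Matrix n n R}
    (h : A.charpoly = B.charpoly) (f : ℕ → R) :
    ∑ s : Finset n, f #s * (A.submatrix Subtype.val Subtype.val : Matrix s s R).det =
      ∑ s : Finset n, f #s * (B.submatrix Subtype.val Subtype.val : Matrix s s R).det := by
  have hcard_mem : ∀ s ∈ (univ : Finset (Finset n)), #s ∈ range (Fintype.card n + 1) :=
    fun s _ => mem_range_succ_iff.2 (card_le_univ s)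
  rw [← sum_fiberwise_of_maps_to hcard_mem, ← sum_fiberwise_of_maps_to hcard_mem]
  refine sum_congr rfl fun k _ => ?_
  rw [univ_filter_card_eq]
  have hfactor (M : Matrix n n R) :
      ∑ s ∈ univ.powersetCard k, f #s * (M.submatrix Subtype.val Subtype.val : Matrix s s R).det =
        f k *
          ∑ s ∈ univ.powersetCard k, (M.submatrix Subtype.val Subtype.val : Matrix s s R).det := by
    rw [mul_sum]
    exact sum_congr rfl fun s hs => by rw [(mem_powersetCard.1 hs).2]
  rw [hfactor, hfactor, sum_powersetCard_det_submatrix_eq_of_charpoly_eq h]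

end Matrix

namespace Matrix

variable {n R : Type*} [Fintype n] [DecidableEq n] [CommRing R] [StarRing R]

theorem det_conjStarAlgAut (U : unitary (Matrix n n R)) (M : Matrix n n R) :
    (conjStarAlgAut R _ U M).det = M.det :=
  det_conj_of_mul_eq_one (mul_star_self_of_mem U.2) (star_mul_self_of_mem U.2)

theorem trace_conjStarAlgAut (U : unitary (Matrix n n R)) (M : Matrix n n R) :
    (conjStarAlgAut R _ U M).trace = M.trace := by
  rw [conjStarAlgAut_apply, trace_mul_cycle, star_mul_self_of_mem U.2, Matrix.one_mul]

theorem inv_conjStarAlgAut (U : unitary (Matrix n n R)) (M : Matrix n n R) :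
    (conjStarAlgAut R _ U M)⁻¹ = conjStarAlgAut R _ U M⁻¹ := by
  rw [conjStarAlgAut_apply, conjStarAlgAut_apply, Matrix.mul_inv_rev, Matrix.mul_inv_rev,
    inv_eq_left_inv (star_mul_self_of_mem U.2), inv_eq_left_inv (mul_star_self_of_mem U.2),
    Matrix.mul_assoc]

end Matrix

namespace Matrix.IsHermitian

variable {n 𝕜 : Type*} [Fintype n] [DecidableEq n] [RCLike 𝕜] {A : Matrix n n 𝕜}

theorem add_one_eq_conjStarAlgAut (hA : A.IsHermitian) :
    A + 1 = conjStarAlgAut 𝕜 _ hA.eigenvectorUnitary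
      (diagonal fun i => (hA.eigenvalues i : 𝕜) + 1) := by
  conv_lhs => rw [hA.spectral_theorem]
  rw [← map_one (conjStarAlgAut 𝕜 _ hA.eigenvectorUnitary), ← map_add, ← diagonal_one,
    diagonal_add]
  rfl

theorem det_add_one (hA : A.IsHermitian) :
    (A + 1).det = ∏ i, ((hA.eigenvalues i : 𝕜) + 1) := by
  rw [hA.add_one_eq_conjStarAlgAut, det_conjStarAlgAut, det_diagonal]

theorem trace_mul_inv_add_one (hA : A.IsHermitian) (h : ∀ i, hA.eigenvalues i + 1 ≠ 0) :
    (A * (A + 1)⁻¹).trace = ∑ i, (hA.eigenvalues i : 𝕜) / (hA.eigenvalues i + 1) := by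
  have h𝕜 (i : n) : (hA.eigenvalues i : 𝕜) + 1 ≠ 0 := mod_cast h i
  have hinv : (diagonal fun i => (hA.eigenvalues i : 𝕜) + 1)⁻¹ =
      diagonal fun i => ((hA.eigenvalues i : 𝕜) + 1)⁻¹ := by
    refine inv_eq_right_inv ?_
    rw [diagonal_mul_diagonal, ← diagonal_one]
    exact congrArg diagonal (funext fun i => mul_inv_cancel₀ (h𝕜 i))
  calc (A * (A + 1)⁻¹).trace
      = (conjStarAlgAut 𝕜 _ hA.eigenvectorUnitary
          (diagonal (RCLike.ofReal ∘ hA.eigenvalues) *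
            diagonal fun i => ((hA.eigenvalues i : 𝕜) + 1)⁻¹)).trace := by
        rw [map_mul, ← hinv, ← inv_conjStarAlgAut, ← hA.add_one_eq_conjStarAlgAut,
          ← hA.spectral_theorem]
    _ = ∑ i, (hA.eigenvalues i : 𝕜) / (hA.eigenvalues i + 1) := by
        rw [trace_conjStarAlgAut, diagonal_mul_diagonal, trace_diagonal]
        simp only [Function.comp_apply, div_eq_mul_inv]

theorem charpoly_eq_charpoly_diagonal (hA : A.IsHermitian) :
    A.charpoly = (diagonal (RCLike.ofReal ∘ hA.eigenvalues)).charpoly := by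
  rw [hA.charpoly_eq, charpoly_diagonal]
  rfl

theorem sum_mul_det_submatrix (hA : A.IsHermitian) (f : ℕ → 𝕜) :
    ∑ s : Finset n, f #s * (A.submatrix Subtype.val Subtype.val : Matrix s s 𝕜).det =
      ∑ s : Finset n, f #s * ∏ i ∈ s, (hA.eigenvalues i : 𝕜) := by
  rw [sum_mul_det_submatrix_eq_of_charpoly_eq hA.charpoly_eq_charpoly_diagonal]
  simp only [det_submatrix_diagonal, Function.comp_apply]

end Matrix.IsHermitian

namespace Finset

variable {ι K : Type*} [DecidableEq ι] [Field K]

theorem sum_powerset_card_mul_prod (a : ι → K) {s : Finset ι} (h : ∀ i ∈ s, a i + 1 ≠ 0) :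
    ∑ t ∈ s.powerset, (#t : K) * ∏ i ∈ t, a i =
      (∑ i ∈ s, a i / (a i + 1)) * ∏ i ∈ s, (a i + 1) := by
  induction s using Finset.induction_on with
  | empty => simp
  | @insert j s hj ih =>
    have hinsert : ∀ t ∈ s.powerset, (#(insert j t) : K) * ∏ i ∈ insert j t, a i =
        a j * ((#t : K) * ∏ i ∈ t, a i) + a j * ∏ i ∈ t, a i := by
      intro t ht
      have hjt : j ∉ t := fun hjt => hj (mem_powerset.1 ht hjt)
      rw [card_insert_of_notMem hjt, prod_insert hjt]
      push_cast
      ring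
    have hs : ∀ i ∈ s, a i + 1 ≠ 0 := fun i hi => h i (mem_insert_of_mem hi)
    have hj_ne := h j (mem_insert_self j s)
    rw [sum_powerset_insert hj, sum_congr rfl hinsert, sum_add_distrib, ← mul_sum, ← mul_sum,
      ih hs, ← prod_add_one, sum_insert hj, prod_insert hj]
    field_simp
    ring

theorem sum_powerset_card_sq_mul_prod (a : ι → K) {s : Finset ι} (h : ∀ i ∈ s, a i + 1 ≠ 0) :
    ∑ t ∈ s.powerset, (#t : K) ^ 2 * ∏ i ∈ t, a i =
      ((∑ i ∈ s, a i / (a i + 1)) ^ 2 + ∑ i ∈ s, a i / (a i + 1) ^ 2) *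
        ∏ i ∈ s, (a i + 1) := by
  induction s using Finset.induction_on with
  | empty => simp
  | @insert j s hj ih =>
    have hinsert : ∀ t ∈ s.powerset, (#(insert j t) : K) ^ 2 * ∏ i ∈ insert j t, a i =
        a j * ((#t : K) ^ 2 * ∏ i ∈ t, a i) + 2 * a j * ((#t : K) * ∏ i ∈ t, a i) +
          a j * ∏ i ∈ t, a i := by
      intro t ht
      have hjt : j ∉ t := fun hjt => hj (mem_powerset.1 ht hjt)
      rw [card_insert_of_notMem hjt, prod_insert hjt]
      push_cast
      ring
    have hs : ∀ i ∈ s, a i + 1 ≠ 0 := fun i hi => h i (mem_insert_of_mem hi)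
    have hj_ne := h j (mem_insert_self j s)
    rw [sum_powerset_insert hj, sum_congr rfl hinsert, sum_add_distrib, sum_add_distrib,
      ← mul_sum, ← mul_sum, ← mul_sum, ih hs, sum_powerset_card_mul_prod a hs, ← prod_add_one,
      sum_insert hj, sum_insert hj, prod_insert hj]
    field_simp
    ring

end Finset

/-- The variance of the cardinality of a subset drawn from the L-ensemble with
kernel `L` satisfies `Var[|Y|] = Σᵢ λᵢ / (λᵢ + 1)²`, where `λᵢ` are the eigenvalues
of `L` and `K = L (L + I)⁻¹`; explicitly,
`Σ_Y |Y|² det(L_Y)/det(L+I) − (trace K)² = Σᵢ λᵢ / (λᵢ + 1)²`. -/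
theorem variance_cardinality {n : ℕ} (L : Matrix (Fin n) (Fin n) ℝ)
    (hL : L.PosSemidef) :
    (∑ Y : Finset (Fin n), (Y.card : ℝ) ^ 2 * (principalSubmatrix L Y).det / (L + 1).det)
        - (L * (L + 1)⁻¹).trace ^ 2
      = ∑ i, hL.1.eigenvalues i / (hL.1.eigenvalues i + 1) ^ 2 := by
  set μ := hL.1.eigenvalues
  have hμ (i : Fin n) : μ i + 1 ≠ 0 := by linarith [hL.eigenvalues_nonneg i]
  have hdet : (L + 1).det = ∏ i, (μ i + 1) := hL.1.det_add_one
  have htrace : (L * (L + 1)⁻¹).trace = ∑ i, μ i / (μ i + 1) :=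
    hL.1.trace_mul_inv_add_one hμ
  have hmoment : ∑ Y : Finset (Fin n), (Y.card : ℝ) ^ 2 * (principalSubmatrix L Y).det =
      ((∑ i, μ i / (μ i + 1)) ^ 2 + ∑ i, μ i / (μ i + 1) ^ 2) * ∏ i, (μ i + 1) := by
    rw [← sum_powerset_card_sq_mul_prod μ fun i _ => hμ i, powerset_univ]
    exact hL.1.sum_mul_det_submatrix fun k => (k : ℝ) ^ 2
  rw [← sum_div, hmoment, hdet, htrace,
    mul_div_cancel_right₀ _ (prod_ne_zero_iff.2 fun i _ => hμ i), add_sub_cancel_left]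
end

section
/- (Complement characterization) Let L be an n×n real symmetric positive semidefinite matrix and K = L(L+I)⁻¹. Then for every subset S ⊆ {1,…,n}, the sum of det(L_Y) over all subsets Y ⊆ {1,…,n} disjoint from S equals det((I − K)_S) · det(L + I); equivalently, the complement Ȳ = {1,…,n} \ Y of a subset drawn from the L-ensemble is a DPP with marginal kernel I − K, with P(S ⊆ Ȳ) = det((I−K)_S). -/
/-!
Expanding `det (M + 1)` multilinearly in the rows, with the rows of `M` outside `T` replaced
by zero, shows that the principal minors `det M_Y` with `Y ⊆ T` sum to `det ((M + 1)_T)`.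
For `T = Sᶜ` the left side of the theorem becomes `det ((L + 1)_{Sᶜ})`. Since
`1 - L (L + 1)⁻¹ = (L + 1)⁻¹` and `L + 1` is positive definite, Jacobi's complementary minor
identity `det A · det ((A⁻¹)_S) = det (A_{Sᶜ})` for `A = L + 1` finishes the proof; that
identity comes from multiplying `A` on the left by `A⁻¹` with its rows outside `S` replaced by
identity rows.
-/

open Matrix BigOperators

namespace Matrix

variable {ι R : Type*} [Fintype ι] [DecidableEq ι] [CommRing R]

theorem of_piecewise_row_mul (S : Finset ι) (X Y A : Matrix ι ι R) :
    of (S.piecewise X.row Y.row) * A = of (S.piecewise (X * A).row (Y * A).row) := by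
  ext i j
  by_cases hi : i ∈ S <;> simp [Finset.piecewise, hi, mul_apply, Matrix.row]

theorem sum_powerset_det_submatrix (M : Matrix ι ι R) (T : Finset ι) :
    ∑ Y ∈ T.powerset, (M.submatrix ((↑) : Y → ι) (↑)).det
      = ((M + 1).submatrix ((↑) : T → ι) (↑)).det := by
  have hrows : T.piecewise M.row 0 + (1 : Matrix ι ι R).row
      = T.piecewise (M + 1).row (1 : Matrix ι ι R).row := by
    ext i j
    rw [Pi.add_apply, Pi.add_apply]
    by_cases hi : i ∈ T <;> simp [Finset.piecewise, hi, Matrix.row]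
  have hexpand := (detRowAlternating : (ι → R) [⋀^ι]→ₗ[R] R).map_add_univ
    (T.piecewise M.row 0) (1 : Matrix ι ι R).row
  rw [hrows] at hexpand
  change det (of (T.piecewise (M + 1).row _))
    = ∑ Y : Finset ι, det (of (Y.piecewise (T.piecewise M.row 0) _)) at hexpand
  rw [← det_piecewise_one_eq_submatrix_det, hexpand,
    ← Finset.sum_subset (Finset.subset_univ T.powerset)]
  · refine Finset.sum_congr rfl fun Y hY => ?_
    rw [Finset.piecewise_piecewise_of_subset_left (Finset.mem_powerset.mp hY),
      ← det_piecewise_one_eq_submatrix_det]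
  · intro Y _ hY
    obtain ⟨i, hiY, hiT⟩ := Finset.not_subset.mp (Finset.mem_powerset.not.mp hY)
    refine det_eq_zero_of_row_eq_zero i fun j => ?_
    simp [Finset.piecewise_eq_of_mem _ _ _ hiY, Finset.piecewise_eq_of_notMem _ _ _ hiT]

theorem det_mul_det_submatrix_nonsing_inv (A : Matrix ι ι R) (hA : IsUnit A.det)
    (S : Finset ι) :
    A.det * (A⁻¹.submatrix ((↑) : S → ι) (↑)).det
      = (A.submatrix ((↑) : ↥Sᶜ → ι) (↑)).det := by
  have hNA : of (S.piecewise A⁻¹.row (1 : Matrix ι ι R).row) * A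
      = of (Sᶜ.piecewise A.row (1 : Matrix ι ι R).row) := by
    rw [of_piecewise_row_mul, nonsing_inv_mul A hA, one_mul, Finset.piecewise_compl]
  rw [← det_piecewise_one_eq_submatrix_det, ← det_piecewise_one_eq_submatrix_det, ← hNA,
    det_mul, mul_comm]

theorem one_sub_mul_nonsing_inv_add_one (A : Matrix ι ι R) (hA : IsUnit (A + 1).det) :
    1 - A * (A + 1)⁻¹ = (A + 1)⁻¹ := by
  rw [sub_eq_iff_eq_add', ← add_one_mul, mul_nonsing_inv _ hA]

end Matrix

/-- Complement characterization: the complement of a subset drawn from the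
L-ensemble with kernel `L` is a DPP with marginal kernel `I − K`, where
`K = L (L + I)⁻¹`.  Explicitly, for every `S`,
`Σ_{Y : Y ∩ S = ∅} det(L_Y) = det((I − K)_S) · det(L + I)`,
i.e. `P(S ⊆ Ȳ) = det((I − K)_S)`. -/
theorem complement_characterization {n : ℕ} (L : Matrix (Fin n) (Fin n) ℝ)
    (hL : L.PosSemidef) (S : Finset (Fin n)) :
    ∑ Y ∈ Finset.univ.filter (fun Y : Finset (Fin n) => Disjoint Y S),
        (principalSubmatrix L Y).det
      = (principalSubmatrix (1 - L * (L + 1)⁻¹) S).det * (L + 1).det := by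
  have hunit : IsUnit (L + 1).det := (PosDef.posSemidef_add hL PosDef.one).det_pos.ne'.isUnit
  have hdisjoint : Finset.univ.filter (fun Y : Finset (Fin n) => Disjoint Y S) = Sᶜ.powerset := by
    ext Y
    simp [Finset.subset_compl_iff_disjoint_right]
  rw [hdisjoint, one_sub_mul_nonsing_inv_add_one L hunit, mul_comm]
  exact (sum_powerset_det_submatrix L Sᶜ).trans
    (det_mul_det_submatrix_nonsing_inv (L + 1) hunit S).symm
end

section
/- (Submodularity of log-determinant) Let L be an n×n real symmetric positive definite matrix. Then the set function f(Y) = log det(L_Y) is submodular on {1,…,n}: for all subsets A ⊆ B ⊆ {1,…,n} and every j ∉ B, f(A ∪ {j}) − f(A) ≥ f(B ∪ {j}) − f(B). Equivalently, det(L_{A∪{j}}) · det(L_B) ≥ det(L_{B∪{j}}) · det(L_A). -/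
/-!
Adding `j ∉ S` to `S` multiplies `det L_S` by the Schur complement `L_jj - vᵀ L_S⁻¹ v`, where
`v` is the `j`-th row of `L` restricted to `S`. For positive definite `M`, `vᵀ M⁻¹ v` is the
maximum of `2 xᵀv - xᵀ M x`, and extending `x` by zero turns the candidates for `L_A` into
candidates for `L_B`. Hence the Schur complement shrinks as `S` grows, which gives both
inequalities.
-/

open Matrix BigOperators

open Function

section ExtendByZero

variable {m n R : Type*} [Fintype m] [Fintype n] [CommSemiring R] {e : m → n}

theorem dotProduct_extend_zero (he : Injective e) (x : m → R) (w : n → R) :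
    extend e x 0 ⬝ᵥ w = x ⬝ᵥ (w ∘ e) := by
  refine (Fintype.sum_of_injective e he _ _ (fun i hi => ?_) fun a => ?_).symm
  · simp [extend_apply' _ _ _ (by simpa using hi)]
  · simp [he.extend_apply]

theorem mulVec_extend_zero (he : Injective e) (M : Matrix n n R) (x : m → R) :
    M *ᵥ extend e x 0 = M.submatrix id e *ᵥ x := by
  ext i
  rw [mulVec, dotProduct_comm, dotProduct_extend_zero he, dotProduct_comm]
  rfl

theorem extend_zero_dotProduct_mulVec (he : Injective e) (M : Matrix n n R) (x : m → R) :
    extend e x 0 ⬝ᵥ M *ᵥ extend e x 0 = x ⬝ᵥ M.submatrix e e *ᵥ x := by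
  rw [mulVec_extend_zero he, dotProduct_extend_zero he]
  rfl

end ExtendByZero

namespace Matrix.PosDef

variable {m n : Type*} [Fintype m] [Fintype n] [DecidableEq m] [DecidableEq n]

theorem isGreatest_dotProduct_inv_mulVec {M : Matrix n n ℝ} (hM : M.PosDef) (v : n → ℝ) :
    IsGreatest (Set.range fun x => 2 * (x ⬝ᵥ v) - x ⬝ᵥ M *ᵥ x) (v ⬝ᵥ M⁻¹ *ᵥ v) := by
  set u := M⁻¹ *ᵥ v
  have hMu : M *ᵥ u = v := by
    rw [mulVec_mulVec, mul_nonsing_inv _ hM.det_pos.ne'.isUnit, one_mulVec]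
  have hsymm : Mᵀ = M := (by simpa using hM.isHermitian : M.IsSymm).eq
  have huM (x : n → ℝ) : u ⬝ᵥ M *ᵥ x = v ⬝ᵥ x := by
    rw [dotProduct_mulVec, ← mulVec_transpose, hsymm, hMu]
  refine ⟨⟨u, ?_⟩, ?_⟩
  · simp only [hMu, dotProduct_comm u v]
    ring
  · rintro _ ⟨x, rfl⟩
    have hnonneg := hM.posSemidef.dotProduct_mulVec_nonneg (x - u)
    simp only [star_trivial, mulVec_sub, sub_dotProduct, dotProduct_sub, huM, hMu] at hnonneg
    rw [dotProduct_comm u v, dotProduct_comm v x] at hnonneg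
    dsimp only
    linarith

theorem dotProduct_inv_mulVec_submatrix_le {M : Matrix n n ℝ} (hM : M.PosDef) {e : m → n}
    (he : Injective e) (v : n → ℝ) :
    (v ∘ e) ⬝ᵥ (M.submatrix e e)⁻¹ *ᵥ (v ∘ e) ≤ v ⬝ᵥ M⁻¹ *ᵥ v := by
  obtain ⟨⟨x, hx⟩, -⟩ := (hM.submatrix he).isGreatest_dotProduct_inv_mulVec (v ∘ e)
  rw [← hx]
  refine (hM.isGreatest_dotProduct_inv_mulVec v).2 ⟨extend e x 0, ?_⟩
  dsimp only
  rw [extend_zero_dotProduct_mulVec he, dotProduct_extend_zero he]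

end Matrix.PosDef

section SchurComplement

variable {n : ℕ}

noncomputable def schurComplement (M : Matrix (Fin n) (Fin n) ℝ) (S : Finset (Fin n))
    (j : Fin n) : ℝ :=
  M j j - (fun i : S => M j i) ⬝ᵥ (principalSubmatrix M S)⁻¹ *ᵥ fun i : S => M i j

theorem det_principalSubmatrix_insert (M : Matrix (Fin n) (Fin n) ℝ) {S : Finset (Fin n)}
    {j : Fin n} (hj : j ∉ S) (hS : IsUnit (principalSubmatrix M S).det) :
    (principalSubmatrix M (insert j S)).det =
      (principalSubmatrix M S).det * schurComplement M S j := by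
  let e := (Finset.subtypeInsertEquivOption hj).trans (Equiv.optionEquivSumPUnit.{0} S)
  have hblocks : (principalSubmatrix M (insert j S)).submatrix e.symm e.symm =
      fromBlocks (principalSubmatrix M S) (of fun i _ => M i j) (of fun _ i => M j i)
        (of fun _ _ => M j j) := by
    ext (i | i) (k | k) <;> rfl
  have := (principalSubmatrix M S).invertibleOfIsUnitDet hS
  rw [← det_submatrix_equiv_self e.symm, hblocks, det_fromBlocks₁₁, invOf_eq_nonsing_inv,
    det_unique (n := PUnit)]
  simp only [schurComplement, Matrix.sub_apply, mul_apply, of_apply, dotProduct, mulVec,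
    Finset.mul_sum, Finset.sum_mul, mul_assoc]
  rw [Finset.sum_comm]

namespace Matrix.PosDef

variable {M : Matrix (Fin n) (Fin n) ℝ}

theorem principalSubmatrix (hM : M.PosDef) (S : Finset (Fin n)) :
    (_root_.principalSubmatrix M S).PosDef :=
  hM.submatrix Subtype.val_injective

theorem schurComplement_antitone (hM : M.PosDef) (j : Fin n) {S T : Finset (Fin n)}
    (hST : S ⊆ T) : schurComplement M T j ≤ schurComplement M S j := by
  have hsymm (S : Finset (Fin n)) : (fun i : S => M i j) = fun i : S => M j i :=
    funext fun i => hM.isHermitian.apply j i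
  rw [schurComplement, schurComplement, hsymm, hsymm]
  exact sub_le_sub_left ((hM.principalSubmatrix T).dotProduct_inv_mulVec_submatrix_le
    (e := fun i : S => (⟨i, hST i.2⟩ : T)) (fun _ _ h => Subtype.ext (Subtype.mk.inj h))
    fun i : T => M j i) _

theorem schurComplement_pos (hM : M.PosDef) {S : Finset (Fin n)} {j : Fin n} (hj : j ∉ S) :
    0 < schurComplement M S j := by
  have hS := (hM.principalSubmatrix S).det_pos
  have hSj := (hM.principalSubmatrix (insert j S)).det_pos
  rw [det_principalSubmatrix_insert M hj hS.ne'.isUnit] at hSj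
  exact pos_of_mul_pos_right hSj hS.le

end Matrix.PosDef

end SchurComplement

/-- Submodularity of the log-determinant: for a positive definite `L`, the function
`f(Y) = log det(L_Y)` satisfies the diminishing-returns inequality
`f(A ∪ {j}) − f(A) ≥ f(B ∪ {j}) − f(B)` for all `A ⊆ B` and `j ∉ B`; equivalently
`det(L_{A∪{j}}) · det(L_B) ≥ det(L_{B∪{j}}) · det(L_A)`. -/
theorem logdet_submodular {n : ℕ} (L : Matrix (Fin n) (Fin n) ℝ)
    (hL : L.PosDef) (A B : Finset (Fin n)) (hAB : A ⊆ B) (j : Fin n) (hj : j ∉ B) :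
    Real.log (principalSubmatrix L (insert j A)).det
        - Real.log (principalSubmatrix L A).det
      ≥ Real.log (principalSubmatrix L (insert j B)).det
        - Real.log (principalSubmatrix L B).det ∧
    (principalSubmatrix L (insert j A)).det * (principalSubmatrix L B).det
      ≥ (principalSubmatrix L (insert j B)).det * (principalSubmatrix L A).det := by
  have hdetA := (hL.principalSubmatrix A).det_pos
  have hdetB := (hL.principalSubmatrix B).det_pos
  have hle := hL.schurComplement_antitone j hAB
  have hpos := hL.schurComplement_pos hj
  rw [det_principalSubmatrix_insert L (fun h => hj (hAB h)) hdetA.ne'.isUnit,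
    det_principalSubmatrix_insert L hj hdetB.ne'.isUnit]
  constructor
  · rw [Real.log_mul hdetA.ne' (hpos.trans_le hle).ne', Real.log_mul hdetB.ne' hpos.ne',
      add_sub_cancel_left, add_sub_cancel_left]
    exact Real.log_le_log hpos hle
  · have := mul_le_mul_of_nonneg_left hle (mul_pos hdetA hdetB).le
    linarith
end

section
/- (Monotonicity of log-determinant) Let L be an n×n real symmetric matrix with L ⪰ I (i.e., L − I is positive semidefinite). Then the set function f(Y) = log det(L_Y) is monotone nondecreasing: for every subset A ⊆ {1,…,n} and every j ∉ A, det(L_{A∪{j}}) ≥ det(L_A). -/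
/-!
Write `L_B` for `B ⊇ A` in block form `[[L_A, X], [Xᴴ, D]]`. Since `L_A ⪰ I` is invertible,
`det L_B = det L_A * det (D - Xᴴ L_A⁻¹ X)`. This Schur complement is `⪰ I`: it is the Schur
complement of `L_A` in `L_B - diag(0, I) = (L_B - I) + diag(I, 0) ⪰ 0`. A matrix `⪰ I` has all
eigenvalues `≥ 1`, hence determinant `≥ 1`.
-/

open Matrix BigOperators

open MatrixOrder

namespace Matrix

variable {ι : Type*} [DecidableEq ι]

lemma isHermitian_of_one_le {S : Matrix ι ι ℝ} (hS : 1 ≤ S) : S.IsHermitian := by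
  simpa using (le_iff.mp hS).isHermitian.add isHermitian_one

lemma posDef_of_one_le [Fintype ι] {S : Matrix ι ι ℝ} (hS : 1 ≤ S) : S.PosDef := by
  simpa using PosDef.posSemidef_add (le_iff.mp hS) PosDef.one

theorem one_le_det_of_one_le [Fintype ι] {S : Matrix ι ι ℝ} (hS : 1 ≤ S) : 1 ≤ S.det := by
  have hS' := isHermitian_of_one_le hS
  have hspec := (CFC.one_le_iff (R := ℝ) S hS'.isSelfAdjoint).mp hS
  rw [hS'.det_eq_prod_eigenvalues]
  exact Finset.one_le_prod fun i _ => by simpa using hspec _ (hS'.eigenvalues_mem_spectrum_real i)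

lemma one_le_submatrix {κ : Type*} [DecidableEq κ] {M : Matrix ι ι ℝ} (hM : 1 ≤ M)
    {f : κ → ι} (hf : Function.Injective f) : 1 ≤ M.submatrix f f := by
  simpa [le_iff, submatrix_sub, submatrix_one f hf] using (le_iff.mp hM).submatrix f

variable {m n : Type*} [Fintype m] [DecidableEq m] [Fintype n] [DecidableEq n]

theorem det_le_det_fromBlocks_of_one_le {A : Matrix m m ℝ} {B : Matrix m n ℝ} {D : Matrix n n ℝ}
    (h : 1 ≤ fromBlocks A B Bᴴ D) : A.det ≤ (fromBlocks A B Bᴴ D).det := by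
  have hA : A.PosDef := posDef_of_one_le (one_le_submatrix h Sum.inl_injective)
  have hAinv := hA.isUnit.invertible
  have hshift : (fromBlocks A B Bᴴ (D - 1)).PosSemidef := by
    have hsplit : fromBlocks A B Bᴴ (D - 1) = (fromBlocks A B Bᴴ D - 1) + fromBlocks 1 0 0 0 := by
      ext (i | i) (j | j) <;> simp [one_apply]
    have hdiag : (fromBlocks (1 : Matrix m m ℝ) 0 0 (0 : Matrix n n ℝ)).PosSemidef := by
      rw [← diagonal_one, ← diagonal_zero, fromBlocks_diagonal, posSemidef_diagonal_iff]
      rintro (i | i) <;> simp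
    exact hsplit ▸ (le_iff.mp h).add hdiag
  have hschur : 1 ≤ D - Bᴴ * A⁻¹ * B :=
    le_iff.mpr (sub_right_comm D 1 (Bᴴ * A⁻¹ * B) ▸ (PosDef.fromBlocks₁₁ B (D - 1) hA).mp hshift)
  rw [det_fromBlocks₁₁, invOf_eq_nonsing_inv]
  exact le_mul_of_one_le_right hA.det_pos.le (one_le_det_of_one_le hschur)

theorem det_toSquareBlockProp_le_of_one_le [Fintype ι]
    {M : Matrix ι ι ℝ} (hM : 1 ≤ M) (p : ι → Prop) [DecidablePred p] :
    (M.toSquareBlockProp p).det ≤ M.det := by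
  let N := M.submatrix (Equiv.sumCompl p) (Equiv.sumCompl p)
  have hN : 1 ≤ N := one_le_submatrix hM (Equiv.sumCompl p).injective
  have hblocks :
      N = fromBlocks (M.toSquareBlockProp p) N.toBlocks₁₂ N.toBlocks₁₂ᴴ N.toBlocks₂₂ := by
    have hsym : N.toBlocks₁₂ᴴ = N.toBlocks₂₁ := congr_arg toBlocks₂₁ (isHermitian_of_one_le hN)
    rw [hsym]
    exact (fromBlocks_toBlocks N).symm
  have hschur := det_le_det_fromBlocks_of_one_le (hblocks ▸ hN)
  rw [← hblocks] at hschur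
  rwa [← det_submatrix_equiv_self (Equiv.sumCompl p) M]

end Matrix

theorem det_principalSubmatrix_mono {n : ℕ} {L : Matrix (Fin n) (Fin n) ℝ} (hL : 1 ≤ L)
    {A B : Finset (Fin n)} (hAB : A ⊆ B) :
    (principalSubmatrix L A).det ≤ (principalSubmatrix L B).det := by
  have hLB : 1 ≤ principalSubmatrix L B := one_le_submatrix hL Subtype.val_injective
  calc (principalSubmatrix L A).det
      = ((principalSubmatrix L B).toSquareBlockProp (fun i => ↑i ∈ A)).det :=
        (det_submatrix_equiv_self (Equiv.subtypeSubtypeEquivSubtype (hAB ·)) _).symm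
    _ ≤ (principalSubmatrix L B).det := det_toSquareBlockProp_le_of_one_le hLB _

theorem logdet_monotone_general {n : ℕ} (L : Matrix (Fin n) (Fin n) ℝ)
    (hL : (L - 1).PosSemidef) (A : Finset (Fin n)) (j : Fin n) :
    (principalSubmatrix L (insert j A)).det ≥ (principalSubmatrix L A).det :=
  det_principalSubmatrix_mono (le_iff.mpr hL) (Finset.subset_insert j A)

/-- Monotonicity of the log-determinant: if `L ⪰ I` (i.e. `L − I` is positive
semidefinite), then the set function `Y ↦ log det(L_Y)` is monotone nondecreasing:
for every `A` and `j ∉ A`, `det(L_{A∪{j}}) ≥ det(L_A)`. -/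
theorem logdet_monotone {n : ℕ} (L : Matrix (Fin n) (Fin n) ℝ)
    (hL : (L - 1).PosSemidef) (A : Finset (Fin n)) (j : Fin n) (hj : j ∉ A) :
    (principalSubmatrix L (insert j A)).det ≥ (principalSubmatrix L A).det :=
  logdet_monotone_general L hL A j
end
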